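/- arXiv:0710.1392 — 4 statements merged into one kernel-verified Lean document; each statement's English description precedes it below -/
import Mathlib

section
/- Let F₁ and F₂ be subfields of a field F₀ and let F = F₁ ∩ F₂. Let β : Vect(F) → Vect(F₁) ×_{Vect(F₀)} Vect(F₂) be the base-change functor into the 2-fibre product category. Then β is an equivalence of categories if and only if for every positive integer n and every matrix A ∈ GL_n(F₀) there exist matrices A₁ ∈ GL_n(F₁) and A₂ ∈ GL_n(F₂) such that A = A₁A₂. -/
/-!
After choosing bases, an object of `Vect(F₁) ×_{Vect(F₀)} Vect(F₂)` of rank `n` is the matrix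
`P ∈ GLₙ(F₀)` of its gluing isomorphism, and two objects are isomorphic exactly when their matrices
lie in the same double coset `GLₙ(F₂) P GLₙ(F₁)`; the base change of an `F`-vector space has
matrix `1`. Hence `β` is essentially surjective iff `GLₙ(F₀) = GLₙ(F₂) GLₙ(F₁)`, which after
inversion is the factorization `GLₙ(F₀) = GLₙ(F₁) GLₙ(F₂)`. Full faithfulness is where
`F = F₁ ∩ F₂` enters: a morphism `β V ⟶ β W` is a pair of matrices over `F₁` and `F₂` with the same
image over `F₀`, i.e. a matrix with entries in `F₁ ∩ F₂`.
-/

open TensorProduct CategoryTheory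

section TwoGluing

variable (F₁ F₂ F₀ : Type) [Field F₁] [Field F₂] [Field F₀]
  [Algebra F₁ F₀] [Algebra F₂ F₀]

/-- An object of the 2-fibre product category `Vect(F₁) ×_{Vect(F₀)} Vect(F₂)`:
a pair of finite dimensional vector spaces `V₁, V₂` over `F₁, F₂` together with
an `F₀`-linear isomorphism between their base changes to `F₀`. -/
structure VectGluing where
  V₁ : FGModuleCat F₁
  V₂ : FGModuleCat F₂
  φ : (F₀ ⊗[F₁] V₁) ≃ₗ[F₀] (F₀ ⊗[F₂] V₂)

variable {F₁ F₂ F₀}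

/-- A morphism in the 2-fibre product category `Vect(F₁) ×_{Vect(F₀)} Vect(F₂)`:
a pair of linear maps compatible with the gluing isomorphisms. -/
@[ext]
structure VectGluingHom (X Y : VectGluing F₁ F₂ F₀) where
  f₁ : X.V₁ ⟶ Y.V₁
  f₂ : X.V₂ ⟶ Y.V₂
  comm : Y.φ.toLinearMap ∘ₗ LinearMap.baseChange F₀ (f₁.hom.hom : X.V₁ →ₗ[F₁] Y.V₁) =
    LinearMap.baseChange F₀ (f₂.hom.hom : X.V₂ →ₗ[F₂] Y.V₂) ∘ₗ X.φ.toLinearMap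

instance : Category (VectGluing F₁ F₂ F₀) where
  Hom X Y := VectGluingHom X Y
  id X := ⟨𝟙 X.V₁, 𝟙 X.V₂, by
    show X.φ.toLinearMap ∘ₗ LinearMap.baseChange F₀ LinearMap.id =
      LinearMap.baseChange F₀ LinearMap.id ∘ₗ X.φ.toLinearMap
    simp [LinearMap.baseChange_id]⟩
  comp {X Y Z} f g := ⟨f.f₁ ≫ g.f₁, f.f₂ ≫ g.f₂, by
    show Z.φ.toLinearMap ∘ₗ LinearMap.baseChange F₀
        ((g.f₁.hom.hom : Y.V₁ →ₗ[F₁] Z.V₁) ∘ₗ (f.f₁.hom.hom : X.V₁ →ₗ[F₁] Y.V₁)) =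
      LinearMap.baseChange F₀
        ((g.f₂.hom.hom : Y.V₂ →ₗ[F₂] Z.V₂) ∘ₗ (f.f₂.hom.hom : X.V₂ →ₗ[F₂] Y.V₂)) ∘ₗ X.φ.toLinearMap
    rw [LinearMap.baseChange_comp, LinearMap.baseChange_comp, ← LinearMap.comp_assoc, g.comm,
      LinearMap.comp_assoc, f.comm, ← LinearMap.comp_assoc]⟩
  id_comp f := by apply VectGluingHom.ext <;> simp
  comp_id f := by apply VectGluingHom.ext <;> simp
  assoc f g h := by apply VectGluingHom.ext <;> simp

end TwoGluing

section BaseChangeFunctor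

variable {F F₁ F₂ F₀ : Type} [Field F] [Field F₁] [Field F₂] [Field F₀]
  [Algebra F F₁] [Algebra F F₂] [Algebra F F₀] [Algebra F₁ F₀] [Algebra F₂ F₀]
  [IsScalarTower F F₁ F₀] [IsScalarTower F F₂ F₀]

lemma vectBaseChange_comm {V W : Type} [AddCommGroup V] [Module F V]
    [AddCommGroup W] [Module F W] (f : V →ₗ[F] W) :
    ((AlgebraTensorModule.cancelBaseChange F F₁ F₀ F₀ W).trans
        (AlgebraTensorModule.cancelBaseChange F F₂ F₀ F₀ W).symm).toLinearMap ∘ₗ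
      LinearMap.baseChange F₀ (LinearMap.baseChange F₁ f) =
    LinearMap.baseChange F₀ (LinearMap.baseChange F₂ f) ∘ₗ
      ((AlgebraTensorModule.cancelBaseChange F F₁ F₀ F₀ V).trans
        (AlgebraTensorModule.cancelBaseChange F F₂ F₀ F₀ V).symm).toLinearMap := by
  apply LinearMap.ext
  intro x
  induction x using TensorProduct.induction_on with
  | zero => simp
  | tmul a y =>
    induction y using TensorProduct.induction_on with
    | zero => simp
    | tmul b v =>
      simp [AlgebraTensorModule.cancelBaseChange_tmul,
        AlgebraTensorModule.cancelBaseChange_symm_tmul, LinearMap.baseChange_tmul,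
        TensorProduct.smul_tmul']
    | add y z hy hz =>
      simp only [tmul_add, map_add] at hy hz ⊢
      rw [hy, hz]
  | add x y hx hy =>
    simp only [map_add] at hx hy ⊢
    rw [hx, hy]

end BaseChangeFunctor

variable (F F₁ F₂ F₀ : Type) [Field F] [Field F₁] [Field F₂] [Field F₀]
  [Algebra F F₁] [Algebra F F₂] [Algebra F F₀] [Algebra F₁ F₀] [Algebra F₂ F₀]
  [IsScalarTower F F₁ F₀] [IsScalarTower F F₂ F₀]

/-- The base change functor `Vect(F) → Vect(F₁) ×_{Vect(F₀)} Vect(F₂)`, sending a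
finite dimensional `F`-vector space `V` to `(V ⊗_F F₁, V ⊗_F F₂)` together with the
canonical isomorphism `(V ⊗_F F₁) ⊗_{F₁} F₀ ≅ V ⊗_F F₀ ≅ (V ⊗_F F₂) ⊗_{F₂} F₀`. -/
noncomputable def vectBaseChange : FGModuleCat F ⥤ VectGluing F₁ F₂ F₀ where
  obj V :=
    { V₁ := FGModuleCat.of F₁ (F₁ ⊗[F] V)
      V₂ := FGModuleCat.of F₂ (F₂ ⊗[F] V)
      φ := (AlgebraTensorModule.cancelBaseChange F F₁ F₀ F₀ V).trans
        (AlgebraTensorModule.cancelBaseChange F F₂ F₀ F₀ V).symm }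
  map {V W} f :=
    { f₁ := FGModuleCat.ofHom (LinearMap.baseChange F₁ (f.hom.hom : V →ₗ[F] W))
      f₂ := FGModuleCat.ofHom (LinearMap.baseChange F₂ (f.hom.hom : V →ₗ[F] W))
      comm := vectBaseChange_comm (f.hom.hom : V →ₗ[F] W) }
  map_id V := by
    refine VectGluingHom.ext ?_ ?_
    · apply FGModuleCat.hom_ext
      exact LinearMap.baseChange_id
    · apply FGModuleCat.hom_ext
      exact LinearMap.baseChange_id
  map_comp {U V W} f g := by
    refine VectGluingHom.ext ?_ ?_
    · apply FGModuleCat.hom_ext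
      exact LinearMap.baseChange_comp _ _
    · apply FGModuleCat.hom_ext
      exact LinearMap.baseChange_comp _ _

open Algebra.TensorProduct Matrix Module

namespace LinearEquiv

variable {K M N ι : Type*} [CommRing K] [AddCommGroup M] [Module K M] [AddCommGroup N] [Module K N]
  [Fintype ι] [DecidableEq ι]

noncomputable def toGL (b : Basis ι K M) (c : Basis ι K N) (e : M ≃ₗ[K] N) : GL ι K where
  val := LinearMap.toMatrix b c e
  inv := LinearMap.toMatrix c b e.symm
  val_inv := by rw [← LinearMap.toMatrix_comp, e.comp_symm, LinearMap.toMatrix_id]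
  inv_val := by rw [← LinearMap.toMatrix_comp, e.symm_comp, LinearMap.toMatrix_id]

@[simp]
lemma coe_toGL (b : Basis ι K M) (c : Basis ι K N) (e : M ≃ₗ[K] N) :
    (e.toGL b c : Matrix ι ι K) = LinearMap.toMatrix b c e := rfl

noncomputable def ofGL (b : Basis ι K M) (c : Basis ι K N) (A : GL ι K) : M ≃ₗ[K] N :=
  LinearEquiv.ofLinearMap (Matrix.toLin b c A) (Matrix.toLin c b ↑A⁻¹)
    (by rw [← Matrix.toLin_mul, A.mul_inv, Matrix.toLin_one])
    (by rw [← Matrix.toLin_mul, A.inv_mul, Matrix.toLin_one])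

@[simp]
lemma toGL_ofGL (b : Basis ι K M) (c : Basis ι K N) (A : GL ι K) : (ofGL b c A).toGL b c = A :=
  Units.ext (LinearMap.toMatrix_toLin b c A)

end LinearEquiv

section BaseChangeMatrix

variable {R₁ R₂ S : Type*} [CommRing R₁] [CommRing R₂] [CommRing S] [Algebra R₁ S] [Algebra R₂ S]
  {ι κ M₁ N₁ M₂ N₂ : Type*} [Fintype ι] [DecidableEq ι] [Fintype κ] [DecidableEq κ]
  [AddCommGroup M₁] [Module R₁ M₁] [AddCommGroup N₁] [Module R₁ N₁]
  [AddCommGroup M₂] [Module R₂ M₂] [AddCommGroup N₂] [Module R₂ N₂]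

lemma LinearMap.comp_baseChange_eq_baseChange_comp_iff (b₁ : Basis ι R₁ M₁) (c₁ : Basis κ R₁ N₁)
    (b₂ : Basis ι R₂ M₂) (c₂ : Basis κ R₂ N₂) (φ : S ⊗[R₁] M₁ →ₗ[S] S ⊗[R₂] M₂)
    (ψ : S ⊗[R₁] N₁ →ₗ[S] S ⊗[R₂] N₂) (f₁ : M₁ →ₗ[R₁] N₁) (f₂ : M₂ →ₗ[R₂] N₂) :
    ψ ∘ₗ f₁.baseChange S = f₂.baseChange S ∘ₗ φ ↔
      toMatrix (basis S c₁) (basis S c₂) ψ * (toMatrix b₁ c₁ f₁).map (algebraMap R₁ S) =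
        (toMatrix b₂ c₂ f₂).map (algebraMap R₂ S) * toMatrix (basis S b₁) (basis S b₂) φ := by
  rw [← (toMatrix (basis S b₁) (basis S c₂)).injective.eq_iff,
    LinearMap.toMatrix_comp _ (basis S c₁), LinearMap.toMatrix_comp _ (basis S b₂),
    toMatrix_baseChange, toMatrix_baseChange]

end BaseChangeMatrix

lemma Matrix.exists_map_eq_of_map_eq {R R₁ R₂ S ι κ : Type*} [CommSemiring R] [CommSemiring R₁]
    [CommSemiring R₂] [CommSemiring S] [Algebra R R₁] [Algebra R R₂] [Algebra R₁ S] [Algebra R₂ S]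
    (hR : ∀ (x₁ : R₁) (x₂ : R₂), algebraMap R₁ S x₁ = algebraMap R₂ S x₂ →
      ∃ y : R, algebraMap R R₁ y = x₁ ∧ algebraMap R R₂ y = x₂)
    {M₁ : Matrix ι κ R₁} {M₂ : Matrix ι κ R₂}
    (h : M₁.map (algebraMap R₁ S) = M₂.map (algebraMap R₂ S)) :
    ∃ N : Matrix ι κ R, N.map (algebraMap R R₁) = M₁ ∧ N.map (algebraMap R R₂) = M₂ := by
  choose N hN₁ hN₂ using fun i j => hR (M₁ i j) (M₂ i j) (congrFun (congrFun h i) j)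
  exact ⟨Matrix.of N, Matrix.ext hN₁, Matrix.ext hN₂⟩

variable {F F₁ F₂ F₀}

namespace VectGluing

variable {X Y : VectGluing F₁ F₂ F₀}

@[ext]
lemma hom_ext {f g : X ⟶ Y} (h₁ : f.f₁ = g.f₁) (h₂ : f.f₂ = g.f₂) : f = g :=
  VectGluingHom.ext h₁ h₂

def fst : VectGluing F₁ F₂ F₀ ⥤ FGModuleCat F₁ where
  obj X := X.V₁
  map f := f.f₁

def snd : VectGluing F₁ F₂ F₀ ⥤ FGModuleCat F₂ where
  obj X := X.V₂
  map f := f.f₂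

noncomputable def isoMk (e₁ : X.V₁ ≃ₗ[F₁] Y.V₁) (e₂ : X.V₂ ≃ₗ[F₂] Y.V₂)
    (h : Y.φ.toLinearMap ∘ₗ e₁.toLinearMap.baseChange F₀ =
      e₂.toLinearMap.baseChange F₀ ∘ₗ X.φ.toLinearMap) : X ≅ Y where
  hom := ⟨FGModuleCat.ofHom e₁.toLinearMap, FGModuleCat.ofHom e₂.toLinearMap, h⟩
  inv := ⟨FGModuleCat.ofHom e₁.symm.toLinearMap, FGModuleCat.ofHom e₂.symm.toLinearMap, by
    change X.φ.toLinearMap ∘ₗ e₁.symm.toLinearMap.baseChange F₀ =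
      e₂.symm.toLinearMap.baseChange F₀ ∘ₗ Y.φ.toLinearMap
    simp only [← LinearEquiv.coe_baseChange, LinearEquiv.baseChange_symm] at h ⊢
    rw [LinearEquiv.eq_toLinearMap_symm_comp, ← LinearMap.comp_assoc,
      LinearEquiv.comp_toLinearMap_symm_eq, h]⟩
  hom_inv_id := by ext : 1 <;> ext x <;> exact LinearEquiv.symm_apply_apply _ x
  inv_hom_id := by ext : 1 <;> ext x <;> exact LinearEquiv.apply_symm_apply _ x

variable {ι : Type} [Fintype ι] [DecidableEq ι]

noncomputable def matrix (X : VectGluing F₁ F₂ F₀) (b₁ : Basis ι F₁ X.V₁) (b₂ : Basis ι F₂ X.V₂) :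
    GL ι F₀ :=
  X.φ.toGL (basis F₀ b₁) (basis F₀ b₂)

lemma finrank_V₁_eq_finrank_V₂ (X : VectGluing F₁ F₂ F₀) :
    finrank F₁ X.V₁ = finrank F₂ X.V₂ := by
  rw [← finrank_baseChange (R := F₀), X.φ.finrank_eq, finrank_baseChange]

theorem nonempty_iso_iff (bX₁ : Basis ι F₁ X.V₁) (bX₂ : Basis ι F₂ X.V₂)
    (bY₁ : Basis ι F₁ Y.V₁) (bY₂ : Basis ι F₂ Y.V₂) :
    Nonempty (X ≅ Y) ↔ ∃ (B₁ : GL ι F₁) (B₂ : GL ι F₂),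
      Y.matrix bY₁ bY₂ * GeneralLinearGroup.map (algebraMap F₁ F₀) B₁ =
        GeneralLinearGroup.map (algebraMap F₂ F₀) B₂ * X.matrix bX₁ bX₂ := by
  simp only [Units.ext_iff, Units.val_mul, GeneralLinearGroup.val_map_apply, matrix,
    LinearEquiv.coe_toGL]
  constructor
  · rintro ⟨i⟩
    refine ⟨(FGModuleCat.isoToLinearEquiv (fst.mapIso i)).toGL bX₁ bY₁,
      (FGModuleCat.isoToLinearEquiv (snd.mapIso i)).toGL bX₂ bY₂, ?_⟩
    exact (LinearMap.comp_baseChange_eq_baseChange_comp_iff ..).1 i.hom.comm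
  · rintro ⟨B₁, B₂, h⟩
    refine ⟨isoMk (LinearEquiv.ofGL bX₁ bY₁ B₁) (LinearEquiv.ofGL bX₂ bY₂ B₂) ?_⟩
    rw [LinearMap.comp_baseChange_eq_baseChange_comp_iff bX₁ bY₁ bX₂ bY₂]
    simpa [← LinearEquiv.coe_toGL] using h

noncomputable def ofGL (A : GL ι F₀) : VectGluing F₁ F₂ F₀ where
  V₁ := FGModuleCat.of F₁ (ι → F₁)
  V₂ := FGModuleCat.of F₂ (ι → F₂)
  φ := LinearEquiv.ofGL (basis F₀ (Pi.basisFun F₁ ι)) (basis F₀ (Pi.basisFun F₂ ι)) A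

@[simp]
lemma matrix_ofGL (A : GL ι F₀) :
    (ofGL A : VectGluing F₁ F₂ F₀).matrix (Pi.basisFun F₁ ι) (Pi.basisFun F₂ ι) = A :=
  LinearEquiv.toGL_ofGL _ _ A

end VectGluing

variable (F₁ F₂ F₀) in
def HasGLFactorization : Prop :=
  ∀ (n : ℕ) (A : GL (Fin n) F₀), ∃ (A₁ : GL (Fin n) F₁) (A₂ : GL (Fin n) F₂),
    A = GeneralLinearGroup.map (algebraMap F₁ F₀) A₁ * GeneralLinearGroup.map (algebraMap F₂ F₀) A₂

lemma hasGLFactorization_iff : HasGLFactorization F₁ F₂ F₀ ↔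
    ∀ (n : ℕ), 0 < n → ∀ A : GL (Fin n) F₀,
      ∃ (A₁ : Matrix (Fin n) (Fin n) F₁) (A₂ : Matrix (Fin n) (Fin n) F₂),
        IsUnit A₁ ∧ IsUnit A₂ ∧
        (A : Matrix (Fin n) (Fin n) F₀) =
          A₁.map (algebraMap F₁ F₀) * A₂.map (algebraMap F₂ F₀) := by
  constructor
  · intro h n _ A
    obtain ⟨A₁, A₂, rfl⟩ := h n A
    exact ⟨A₁, A₂, A₁.isUnit, A₂.isUnit, rfl⟩
  · intro h n A
    rcases n.eq_zero_or_pos with rfl | hn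
    · exact ⟨1, 1, Subsingleton.elim _ _⟩
    · obtain ⟨A₁, A₂, h₁, h₂, hA⟩ := h n hn A
      exact ⟨h₁.unit, h₂.unit, Units.ext hA⟩

lemma toMatrix_vectBaseChange_obj_φ {ι : Type*} [Fintype ι] [DecidableEq ι] (V : FGModuleCat F)
    (b : Basis ι F V) :
    LinearMap.toMatrix (basis F₀ (basis F₁ b)) (basis F₀ (basis F₂ b))
      ((vectBaseChange F F₁ F₂ F₀).obj V).φ.toLinearMap = 1 := by
  change LinearMap.toMatrix _ _ ((AlgebraTensorModule.cancelBaseChange F F₁ F₀ F₀ V).trans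
    (AlgebraTensorModule.cancelBaseChange F F₂ F₀ F₀ V).symm).toLinearMap = 1
  ext i j
  rw [LinearMap.toMatrix_apply]
  simp [basis_apply, basis_repr_tmul, AlgebraTensorModule.cancelBaseChange_tmul,
    AlgebraTensorModule.cancelBaseChange_symm_tmul, Matrix.one_apply, Finsupp.single_apply, eq_comm]

lemma matrix_vectBaseChange_obj {ι : Type} [Fintype ι] [DecidableEq ι] (V : FGModuleCat F)
    (b : Basis ι F V) :
    ((vectBaseChange F F₁ F₂ F₀).obj V).matrix (basis F₁ b) (basis F₂ b) = 1 :=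
  Units.ext (toMatrix_vectBaseChange_obj_φ V b)

lemma vectBaseChange_faithful : (vectBaseChange F F₁ F₂ F₀).Faithful :=
  ⟨fun {V _} _ _ h => FGModuleCat.hom_ext <|
    LinearMap.baseChangeHom_injective F V F₁ (congrArg (fun f => f.f₁.hom.hom) h)⟩

lemma vectBaseChange_full
    (hF : ∀ (x₁ : F₁) (x₂ : F₂), algebraMap F₁ F₀ x₁ = algebraMap F₂ F₀ x₂ →
      ∃ y : F, algebraMap F F₁ y = x₁ ∧ algebraMap F F₂ y = x₂) :
    (vectBaseChange F F₁ F₂ F₀).Full := by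
  refine ⟨fun {V W} f => ?_⟩
  let bV := Module.finBasis F V
  let bW := Module.finBasis F W
  have hf := (LinearMap.comp_baseChange_eq_baseChange_comp_iff (basis F₁ bV) (basis F₁ bW)
    (basis F₂ bV) (basis F₂ bW) _ _ _ _).1 f.comm
  rw [toMatrix_vectBaseChange_obj_φ, toMatrix_vectBaseChange_obj_φ, Matrix.one_mul,
    Matrix.mul_one] at hf
  obtain ⟨N, hN₁, hN₂⟩ := Matrix.exists_map_eq_of_map_eq hF hf
  refine ⟨FGModuleCat.ofHom (Matrix.toLin bV bW N), ?_⟩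
  ext : 1 <;>
    refine FGModuleCat.hom_ext ((LinearMap.toMatrix (basis _ bV) (basis _ bW)).injective ?_)
  · exact (LinearMap.toMatrix_baseChange _ _ _ _).trans
      ((congrArg (Matrix.map · _) (LinearMap.toMatrix_toLin bV bW N)).trans hN₁)
  · exact (LinearMap.toMatrix_baseChange _ _ _ _).trans
      ((congrArg (Matrix.map · _) (LinearMap.toMatrix_toLin bV bW N)).trans hN₂)

lemma vectBaseChange_essSurj (h : HasGLFactorization F₁ F₂ F₀) :
    (vectBaseChange F F₁ F₂ F₀).EssSurj := by
  refine ⟨fun X => ?_⟩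
  let n := finrank F₁ X.V₁
  let b₁ := Module.finBasis F₁ X.V₁
  let b₂ := Module.finBasisOfFinrankEq F₂ X.V₂ X.finrank_V₁_eq_finrank_V₂.symm
  let b := Pi.basisFun F (Fin n)
  obtain ⟨A₁, A₂, hA⟩ := h n (X.matrix b₁ b₂)⁻¹
  refine ⟨FGModuleCat.of F (Fin n → F),
    (VectGluing.nonempty_iso_iff (basis F₁ b) (basis F₂ b) b₁ b₂).2 ⟨A₁, A₂⁻¹, ?_⟩⟩
  rw [matrix_vectBaseChange_obj, mul_one, map_inv, eq_inv_iff_mul_eq_one, mul_assoc, ← hA,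
    mul_inv_cancel]

lemma hasGLFactorization_of_essSurj [(vectBaseChange F F₁ F₂ F₀).EssSurj] :
    HasGLFactorization F₁ F₂ F₀ := by
  intro n A
  let X : VectGluing F₁ F₂ F₀ := .ofGL A⁻¹
  let V := (vectBaseChange F F₁ F₂ F₀).objPreimage X
  let i := (vectBaseChange F F₁ F₂ F₀).objObjPreimageIso X
  have hV : finrank F V = n := finrank_baseChange.symm.trans <|
    (FGModuleCat.isoToLinearEquiv (VectGluing.fst.mapIso i)).finrank_eq.trans (finrank_fin_fun F₁)
  let b := finBasisOfFinrankEq F V hV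
  obtain ⟨B₁, B₂, hB⟩ := (VectGluing.nonempty_iso_iff (basis F₁ b) (basis F₂ b)
    (Pi.basisFun F₁ (Fin n)) (Pi.basisFun F₂ (Fin n))).1 ⟨i⟩
  rw [VectGluing.matrix_ofGL, matrix_vectBaseChange_obj, mul_one, inv_mul_eq_iff_eq_mul] at hB
  exact ⟨B₁, B₂⁻¹, by rw [map_inv, hB, mul_inv_cancel_right]⟩

theorem vectBaseChange_isEquivalence_iff
    (hF : ∀ (x₁ : F₁) (x₂ : F₂), algebraMap F₁ F₀ x₁ = algebraMap F₂ F₀ x₂ →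
      ∃ y : F, algebraMap F F₁ y = x₁ ∧ algebraMap F F₂ y = x₂) :
    (vectBaseChange F F₁ F₂ F₀).IsEquivalence ↔ HasGLFactorization F₁ F₂ F₀ :=
  ⟨fun _ => hasGLFactorization_of_essSurj (F := F),
    fun h => ⟨vectBaseChange_faithful, vectBaseChange_full hF, vectBaseChange_essSurj h⟩⟩

/-- Let `F₁` and `F₂` be subfields of a field `F₀` and let `F = F₁ ∩ F₂`.
The base change functor `β : Vect(F) → Vect(F₁) ×_{Vect(F₀)} Vect(F₂)` is an equivalence of
categories if and only if for every positive integer `n`, every matrix `A ∈ GLₙ(F₀)` factors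
as `A = A₁ A₂` with `A₁ ∈ GLₙ(F₁)` and `A₂ ∈ GLₙ(F₂)`. -/
theorem patching_matrix_factorization_criterion
    (F₀ : Type) [Field F₀] (F₁ F₂ : Subfield F₀) :
    letI : Algebra ↥(F₁ ⊓ F₂) ↥F₁ :=
      (Subfield.inclusion (inf_le_left : F₁ ⊓ F₂ ≤ F₁)).toAlgebra
    letI : Algebra ↥(F₁ ⊓ F₂) ↥F₂ :=
      (Subfield.inclusion (inf_le_right : F₁ ⊓ F₂ ≤ F₂)).toAlgebra
    letI : IsScalarTower ↥(F₁ ⊓ F₂) ↥F₁ F₀ := IsScalarTower.of_algebraMap_eq (fun x => rfl)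
    letI : IsScalarTower ↥(F₁ ⊓ F₂) ↥F₂ F₀ := IsScalarTower.of_algebraMap_eq (fun x => rfl)
    (Functor.IsEquivalence (vectBaseChange ↥(F₁ ⊓ F₂) ↥F₁ ↥F₂ F₀)) ↔
      (∀ (n : ℕ), 0 < n → ∀ A : GL (Fin n) F₀,
        ∃ (A₁ : Matrix (Fin n) (Fin n) ↥F₁) (A₂ : Matrix (Fin n) (Fin n) ↥F₂),
          IsUnit A₁ ∧ IsUnit A₂ ∧
          (A : Matrix (Fin n) (Fin n) F₀) =
            A₁.map (fun x => (x : F₀)) * A₂.map (fun x => (x : F₀))) := by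
  let : Algebra ↥(F₁ ⊓ F₂) ↥F₁ := (Subfield.inclusion inf_le_left).toAlgebra
  let : Algebra ↥(F₁ ⊓ F₂) ↥F₂ := (Subfield.inclusion inf_le_right).toAlgebra
  let : IsScalarTower ↥(F₁ ⊓ F₂) ↥F₁ F₀ := .of_algebraMap_eq fun _ => rfl
  let : IsScalarTower ↥(F₁ ⊓ F₂) ↥F₂ F₀ := .of_algebraMap_eq fun _ => rfl
  have hF (x₁ : F₁) (x₂ : F₂) (h : (x₁ : F₀) = x₂) :
      ∃ y : ↥(F₁ ⊓ F₂), algebraMap _ F₁ y = x₁ ∧ algebraMap _ F₂ y = x₂ :=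
    ⟨⟨x₁, Subfield.mem_inf.2 ⟨x₁.2, h ▸ x₂.2⟩⟩, rfl, Subtype.ext h⟩
  exact (vectBaseChange_isEquivalence_iff hF).trans hasGLFactorization_iff
end

section
/- Let R̂₀ be a complete discrete valuation ring with uniformizer t, and let R̂₁ ≤ R̂₀ be a t-adically complete subring containing t. Let F₀ and F₁ be the fraction fields of R̂₀ and R̂₁ (with F₁ regarded as a subfield of F₀). Assume that R̂₁/tR̂₁ is a domain whose fraction field equals R̂₀/tR̂₀. Then R₀ := R̂₀ ∩ F₁ ⊆ F₀ is t-adically dense in R̂₀; that is, for every f ∈ R̂₀ and every m ≥ 0 there exists f_m ∈ R₀ with f − f_m ∈ t^m R̂₀. -/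
/-!
Since `t ∈ R₁` and every residue class mod `t` is represented by a fraction `b / c` of elements
of `R₁` with `c` a unit of `R₀`, the subring `R₀ ∩ Frac(R₁)` surjects onto `R₀ / t`; for a
subring containing `t`, surjecting mod `t` already gives density mod every `t ^ m`, by
correcting an approximation `f ≡ g mod t ^ m` with `t ^ m` times a representative of
`(f - g) / t ^ m` mod `t`.
-/

namespace Subring

variable {R : Type*} [CommRing R]

theorem exists_mem_sub_pow_dvd (S : Subring R) {t : R} (ht : t ∈ S)
    (hres : ∀ a : R, ∃ g ∈ S, t ∣ a - g) (f : R) (m : ℕ) : ∃ g ∈ S, t ^ m ∣ f - g := by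
  induction m with
  | zero => exact ⟨0, S.zero_mem, by simp⟩
  | succ m ih =>
    obtain ⟨g, hgS, h, hfg⟩ := ih
    obtain ⟨g', hg'S, hhg'⟩ := hres h
    refine ⟨g + t ^ m * g', add_mem hgS (mul_mem (pow_mem ht m) hg'S), ?_⟩
    have hsplit : f - (g + t ^ m * g') = t ^ m * (h - g') := by linear_combination hfg
    rw [hsplit, pow_succ]
    exact mul_dvd_mul_left _ hhg'

variable [IsDomain R]

/-- The subring `R ∩ Frac(R₁)` of `R`. -/
def fractionClosure (R₁ : Subring R) : Subring R where
  carrier := {g | ∃ b c : R₁, c ≠ 0 ∧ g * c = b}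
  zero_mem' := ⟨0, 1, one_ne_zero, by simp⟩
  one_mem' := ⟨1, 1, one_ne_zero, by simp⟩
  add_mem' := by
    rintro g g' ⟨b, c, hc, hgc⟩ ⟨b', c', hc', hgc'⟩
    refine ⟨b * c' + b' * c, c * c', mul_ne_zero hc hc', ?_⟩
    push_cast
    linear_combination (c' : R) * hgc + (c : R) * hgc'
  mul_mem' := by
    rintro g g' ⟨b, c, hc, hgc⟩ ⟨b', c', hc', hgc'⟩
    refine ⟨b * b', c * c', mul_ne_zero hc hc', ?_⟩
    push_cast
    linear_combination (g' * c') * hgc + (b : R) * hgc'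
  neg_mem' := by
    rintro g ⟨b, c, hc, hgc⟩
    exact ⟨-b, c, hc, by push_cast; linear_combination -hgc⟩

theorem le_fractionClosure (R₁ : Subring R) : R₁ ≤ R₁.fractionClosure :=
  fun x hx => ⟨⟨x, hx⟩, 1, one_ne_zero, by simp⟩

end Subring

theorem IsDiscreteValuationRing.isUnit_of_not_dvd {R : Type*} [CommRing R] [IsDomain R]
    [IsDiscreteValuationRing R] {t : R} (ht : Irreducible t) {c : R} (hc : ¬ t ∣ c) :
    IsUnit c := by
  by_contra hu
  rw [← mem_nonunits_iff, ← IsLocalRing.mem_maximalIdeal, (irreducible_iff_uniformizer t).mp ht,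
    Ideal.mem_span_singleton] at hu
  exact hc hu

theorem exists_mem_fractionClosure_sub_dvd {R : Type*} [CommRing R] [IsDomain R]
    [IsDiscreteValuationRing R] {t : R} (ht : Irreducible t) (R₁ : Subring R)
    (hfrac : ∀ a : R, ∃ b c : R₁, ¬ t ∣ (c : R) ∧ t ∣ (a * (c : R) - (b : R))) (a : R) :
    ∃ g ∈ R₁.fractionClosure, t ∣ a - g := by
  obtain ⟨b, c, htc, hac⟩ := hfrac a
  obtain ⟨u, hu⟩ := IsDiscreteValuationRing.isUnit_of_not_dvd ht htc
  have hgc : (b : R) * ↑u⁻¹ * c = b := by rw [← hu, mul_assoc, Units.inv_mul, mul_one]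
  refine ⟨b * ↑u⁻¹, ⟨b, c, fun h0 => htc (by simp [h0]), hgc⟩, ?_⟩
  have hdvd : t ∣ (a - b * ↑u⁻¹) * c := by rwa [sub_mul, hgc]
  exact (ht.prime.dvd_or_dvd hdvd).resolve_right htc

theorem dense_intersection_with_fraction_field_general
    (R₀ : Type) [CommRing R₀] [IsDomain R₀] [IsDiscreteValuationRing R₀]
    (t : R₀) (ht : Irreducible t)
    (R₁ : Subring R₀) (htR₁ : t ∈ R₁)
    -- the fraction field of `R̂₁/tR̂₁` is all of `R̂₀/tR̂₀`:
    (hfrac : ∀ a : R₀, ∃ b c : ↥R₁, ¬ t ∣ (c : R₀) ∧ t ∣ (a * (c : R₀) - (b : R₀))) :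
    ∀ (f : R₀) (m : ℕ), ∃ g : R₀,
      (∃ b c : ↥R₁, c ≠ 0 ∧ g * (c : R₀) = (b : R₀)) ∧ t ^ m ∣ (f - g) :=
  R₁.fractionClosure.exists_mem_sub_pow_dvd (R₁.le_fractionClosure htR₁)
    (exists_mem_fractionClosure_sub_dvd ht R₁ hfrac)

/-- Let `R̂₀` be a complete discrete valuation ring with uniformizer `t`,
and `R̂₁ ≤ R̂₀` a `t`-adically complete subring containing `t`, such that
`R̂₁/tR̂₁ → R̂₀/tR̂₀` is injective and every element of the field `R̂₀/tR̂₀` is a fraction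
of elements of (the image of) `R̂₁/tR̂₁`.  Then `R̂₀ ∩ F₁` is `t`-adically dense in `R̂₀`:
for every `f ∈ R̂₀` and `m ≥ 0` there is `g ∈ R̂₀` lying in the fraction field of `R̂₁`
with `f - g ∈ t^m R̂₀`. -/
theorem dense_intersection_with_fraction_field
    (R₀ : Type) [CommRing R₀] [IsDomain R₀] [IsDiscreteValuationRing R₀]
    (t : R₀) (ht : Irreducible t)
    [IsAdicComplete (Ideal.span {t} : Ideal R₀) R₀]
    (R₁ : Subring R₀) (htR₁ : t ∈ R₁)
    [IsAdicComplete (Ideal.span {(⟨t, htR₁⟩ : ↥R₁)} : Ideal ↥R₁) ↥R₁]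
    -- `R̂₁/tR̂₁ → R̂₀/tR̂₀` is injective:
    (hinj : ∀ x : ↥R₁, t ∣ (x : R₀) → (⟨t, htR₁⟩ : ↥R₁) ∣ x)
    -- the fraction field of `R̂₁/tR̂₁` is all of `R̂₀/tR̂₀`:
    (hfrac : ∀ a : R₀, ∃ b c : ↥R₁, ¬ t ∣ (c : R₀) ∧ t ∣ (a * (c : R₀) - (b : R₀))) :
    ∀ (f : R₀) (m : ℕ), ∃ g : R₀,
      (∃ b c : ↥R₁, c ≠ 0 ∧ g * (c : R₀) = (b : R₀)) ∧ t ^ m ∣ (f - g) :=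
  dense_intersection_with_fraction_field_general R₀ t ht R₁ htR₁ hfrac
end

section
/- Let T be a domain and t ∈ T an element generating a prime ideal (t) ⊂ T, and let M ⊆ M₁, M₂ ⊆ M₀ be T-modules with no t-torsion such that: M is t-adically complete; M ∩ tMᵢ = tM and Mᵢ ∩ tM₀ = tMᵢ for i = 1,2; and ⋂_{j=1}^∞ t^j M₀ = (0). Assume that (M₁/tM₁) ∩ (M₂/tM₂) = M/tM inside M₀/tM₀ (where these quotients are embedded in M₀/tM₀ via the maps induced by the inclusions). Then M₁ ∩ M₂ = M, the intersection being taken inside M₀. -/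
/-!
Since `M₀` has no `t`-torsion, `N := M₁ ∩ M₂` inherits `N ∩ tM₀ = tN` from `M₁` and `M₂`, and the
modular law turns the hypothesis on reductions modulo `t` into `N = M + tN`. So the inclusion
`M → N` is surjective modulo `t`; as `M` is `t`-adically complete and `N ⊆ M₀` is `t`-adically
separated, successive approximation shows it is surjective.
-/

open Pointwise

theorem IsHausdorff.of_injective {R M N : Type*} [CommRing R] {I : Ideal R}
    [AddCommGroup M] [Module R M] [AddCommGroup N] [Module R N] [IsHausdorff I M]
    {f : N →ₗ[R] M} (hf : Function.Injective f) : IsHausdorff I N := by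
  refine ⟨fun x hx => hf ?_⟩
  rw [map_zero]
  refine IsHausdorff.haus ‹_› (f x) fun n => SModEq.zero.mpr ?_
  exact Submodule.smul_top_le_comap_smul_top _ f (SModEq.zero.mp (hx n))

theorem isHausdorff_span_singleton_of_iInf_eq_bot {R M : Type*} [CommRing R] [AddCommGroup M]
    [Module R M] {t : R} (h : (⨅ j : ℕ, (t ^ (j + 1)) • (⊤ : Submodule R M)) = ⊥) :
    IsHausdorff (Ideal.span {t}) M := by
  refine ⟨fun x hx => ?_⟩
  rw [← Submodule.mem_bot R, ← h, Submodule.mem_iInf]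
  intro j
  simpa [SModEq.zero, Ideal.span_singleton_pow, Submodule.ideal_span_singleton_smul] using hx (j + 1)

namespace Submodule

variable {R E : Type*} [CommRing R] [AddCommGroup E] [Module R E]

theorem le_of_le_sup_smul_of_isPrecomplete {I : Ideal R} {M N : Submodule R E} [IsPrecomplete I M]
    [IsHausdorff I N] (hMN : M ≤ N) (h : N ≤ M ⊔ I • N) : N ≤ M := by
  have hsurj : Function.Surjective (inclusion hMN) := by
    refine surjective_of_mkQ_comp_surjective (I := I) fun z => ?_
    obtain ⟨⟨z, hz⟩, rfl⟩ := mkQ_surjective _ z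
    obtain ⟨m, hm, w, hw, rfl⟩ := mem_sup.mp (h hz)
    rw [← N.range_subtype, ← map_top, ← map_smul''] at hw
    obtain ⟨w, hw, rfl⟩ := hw
    refine ⟨⟨m, hm⟩, (Quotient.eq _).mpr ?_⟩
    convert neg_mem hw using 1
    ext
    simp
  intro x hx
  obtain ⟨m, hm⟩ := hsurj ⟨x, hx⟩
  rw [← show (m : E) = x from congrArg Subtype.val hm]
  exact m.2

variable {t : R}

theorem mem_of_smul_mem_of_inf_smul_top_eq (htorsion : ∀ x : E, t • x = 0 → x = 0)
    {N : Submodule R E} (hN : N ⊓ t • ⊤ = t • N) {y : E} (hy : t • y ∈ N) : y ∈ N := by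
  obtain ⟨y', hy', hty'⟩ := (mem_smul_pointwise_iff_exists _ _ _).mp
    (hN ▸ mem_inf.mpr ⟨hy, smul_mem_pointwise_smul _ _ _ mem_top⟩ : t • y ∈ t • N)
  have : y' = y := sub_eq_zero.mp (htorsion _ (by rw [smul_sub, hty', sub_self]))
  exact this ▸ hy'

theorem inf_inf_smul_top_eq (htorsion : ∀ x : E, t • x = 0 → x = 0) {M₁ M₂ : Submodule R E}
    (h₁ : M₁ ⊓ t • ⊤ = t • M₁) (h₂ : M₂ ⊓ t • ⊤ = t • M₂) :
    M₁ ⊓ M₂ ⊓ t • ⊤ = t • (M₁ ⊓ M₂) := by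
  refine le_antisymm (fun x hx => ?_)
    (le_inf (smul_le_self_of_tower _ _) (smul_mono_right _ le_top))
  obtain ⟨⟨hx₁, hx₂⟩, hx⟩ := hx
  obtain ⟨y, -, rfl⟩ := (mem_smul_pointwise_iff_exists _ _ _).mp hx
  exact smul_mem_pointwise_smul _ _ _ ⟨mem_of_smul_mem_of_inf_smul_top_eq htorsion h₁ hx₁,
    mem_of_smul_mem_of_inf_smul_top_eq htorsion h₂ hx₂⟩

end Submodule

theorem intersection_lemma_general
    (T : Type) [CommRing T] (t : T)
    (M₀ : Type) [AddCommGroup M₀] [Module T M₀]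
    (M M₁ M₂ : Submodule T M₀)
    (hM1 : M ≤ M₁) (hM2 : M ≤ M₂)
    (htorsion : ∀ x : M₀, t • x = 0 → x = 0)
    (hcomplete : IsAdicComplete (Ideal.span {t} : Ideal T) ↥M)
    (h3 : M₁ ⊓ (t • (⊤ : Submodule T M₀)) = t • M₁)
    (h4 : M₂ ⊓ (t • (⊤ : Submodule T M₀)) = t • M₂)
    (hsep : (⨅ j : ℕ, (t ^ (j + 1)) • (⊤ : Submodule T M₀)) = ⊥)
    (hint : (M₁ ⊔ t • (⊤ : Submodule T M₀)) ⊓ (M₂ ⊔ t • (⊤ : Submodule T M₀)) =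
      M ⊔ t • (⊤ : Submodule T M₀)) :
    M₁ ⊓ M₂ = M := by
  have hM : M ≤ M₁ ⊓ M₂ := le_inf hM1 hM2
  have hle : M₁ ⊓ M₂ ≤ M ⊔ t • ⊤ := hint ▸ inf_le_inf le_sup_left le_sup_left
  have hreduction : M₁ ⊓ M₂ ≤ M ⊔ Ideal.span {t} • (M₁ ⊓ M₂) :=
    calc M₁ ⊓ M₂ ≤ (M ⊔ t • ⊤) ⊓ (M₁ ⊓ M₂) := le_inf hle le_rfl
      _ = M ⊔ t • ⊤ ⊓ (M₁ ⊓ M₂) := sup_inf_assoc_of_le _ hM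
      _ = M ⊔ Ideal.span {t} • (M₁ ⊓ M₂) := by
        rw [inf_comm, Submodule.inf_inf_smul_top_eq htorsion h3 h4,
          Submodule.ideal_span_singleton_smul]
  have := isHausdorff_span_singleton_of_iInf_eq_bot hsep
  have : IsHausdorff (Ideal.span {t}) ↥(M₁ ⊓ M₂) :=
    IsHausdorff.of_injective (M₁ ⊓ M₂).injective_subtype
  exact le_antisymm (Submodule.le_of_le_sup_smul_of_isPrecomplete hM hreduction) hM

/-- Let `T` be a domain and `t ∈ T` generate a prime ideal.  Let
`M ≤ M₁, M₂ ≤ M₀` be `T`-modules without `t`-torsion such that `M` is `t`-adically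
complete, `M ∩ tMᵢ = tM` and `Mᵢ ∩ tM₀ = tMᵢ` (`i = 1,2`), and `⋂_{j≥1} t^j M₀ = 0`.
If `(M₁/tM₁) ∩ (M₂/tM₂) = M/tM` inside `M₀/tM₀` (equivalently,
`(M₁ + tM₀) ∩ (M₂ + tM₀) = M + tM₀`), then `M₁ ∩ M₂ = M` inside `M₀`. -/
theorem intersection_lemma
    (T : Type) [CommRing T] [IsDomain T] (t : T)
    (hprime : (Ideal.span {t} : Ideal T).IsPrime)
    (M₀ : Type) [AddCommGroup M₀] [Module T M₀]
    (M M₁ M₂ : Submodule T M₀)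
    (hM1 : M ≤ M₁) (hM2 : M ≤ M₂)
    (htorsion : ∀ x : M₀, t • x = 0 → x = 0)
    (hcomplete : IsAdicComplete (Ideal.span {t} : Ideal T) ↥M)
    (h1 : M ⊓ (t • M₁) = t • M) (h2 : M ⊓ (t • M₂) = t • M)
    (h3 : M₁ ⊓ (t • (⊤ : Submodule T M₀)) = t • M₁)
    (h4 : M₂ ⊓ (t • (⊤ : Submodule T M₀)) = t • M₂)
    (hsep : (⨅ j : ℕ, (t ^ (j + 1)) • (⊤ : Submodule T M₀)) = ⊥)
    (hint : (M₁ ⊔ t • (⊤ : Submodule T M₀)) ⊓ (M₂ ⊔ t • (⊤ : Submodule T M₀)) =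
      M ⊔ t • (⊤ : Submodule T M₀)) :
    M₁ ⊓ M₂ = M :=
  intersection_lemma_general T t M₀ M M₁ M₂ hM1 hM2 htorsion hcomplete h3 h4 hsep hint
end

section
/- Let R̂ be a 2-dimensional regular local domain with maximal ideal m and local parameters f, t, such that R̂ is t-adically complete. Let R̂₁ be the m-adic completion of R̂, let R̂₂ be the t-adic completion of R̂[f⁻¹], and let R̂₀ be the t-adic completion of R̂₁[f⁻¹]. Then for every a ∈ R̂₀ there exist b ∈ R̂₁ and c ∈ R̂₂ such that a ≡ b + c (mod tR̂₀). -/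
set_option maxHeartbeats 800000
set_option synthInstance.maxHeartbeats 400000

/-! Setup for the complete local case (Section 5 of Harbater–Hartmann,
"Patching over fields"). -/

open scoped Classical

section AdicDefs

variable (R : Type) [CommRing R] (t : R)

/-- The `t`-adic completion of `R`. -/
noncomputable def tAdicCompletion : Type := AdicCompletion (Ideal.span {t} : Ideal R) R

noncomputable instance : CommRing (tAdicCompletion R t) :=
  inferInstanceAs (CommRing (AdicCompletion (Ideal.span {t} : Ideal R) R))

noncomputable instance : Algebra R (tAdicCompletion R t) :=
  inferInstanceAs (Algebra R (AdicCompletion (Ideal.span {t} : Ideal R) R))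

end AdicDefs

section LocalSetup

variable (R : Type) [CommRing R] [IsDomain R] [IsLocalRing R]

/-- `R̂₁`: the completion of the local ring `R̂` at its maximal ideal. -/
noncomputable def mAdicCompletion : Type := AdicCompletion (IsLocalRing.maximalIdeal R) R

noncomputable instance : CommRing (mAdicCompletion R) :=
  inferInstanceAs (CommRing (AdicCompletion (IsLocalRing.maximalIdeal R) R))

noncomputable instance : Algebra R (mAdicCompletion R) :=
  inferInstanceAs (Algebra R (AdicCompletion (IsLocalRing.maximalIdeal R) R))

variable (f t : R)

/-- `R̂₂`: the `t`-adic completion of `R̂[f⁻¹]`. -/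
noncomputable def Rhat₂ : Type :=
  tAdicCompletion (Localization.Away f) (algebraMap R (Localization.Away f) t)

noncomputable instance : CommRing (Rhat₂ R f t) :=
  inferInstanceAs (CommRing
    (tAdicCompletion (Localization.Away f) (algebraMap R (Localization.Away f) t)))

/-- `R̂₀`: the `t`-adic completion of `R̂₁[f⁻¹]`. -/
noncomputable def Rhat₀ : Type :=
  tAdicCompletion (Localization.Away (algebraMap R (mAdicCompletion R) f))
    (algebraMap (mAdicCompletion R)
      (Localization.Away (algebraMap R (mAdicCompletion R) f))
      (algebraMap R (mAdicCompletion R) t))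

noncomputable instance : CommRing (Rhat₀ R f t) :=
  inferInstanceAs (CommRing
    (tAdicCompletion (Localization.Away (algebraMap R (mAdicCompletion R) f))
      (algebraMap (mAdicCompletion R)
        (Localization.Away (algebraMap R (mAdicCompletion R) f))
        (algebraMap R (mAdicCompletion R) t))))

/-- The canonical ring homomorphism `R̂₁ → R̂₀`. -/
noncomputable def iota₁₀ : mAdicCompletion R →+* Rhat₀ R f t :=
  (algebraMap (Localization.Away (algebraMap R (mAdicCompletion R) f))
      (tAdicCompletion (Localization.Away (algebraMap R (mAdicCompletion R) f))
        (algebraMap (mAdicCompletion R)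
          (Localization.Away (algebraMap R (mAdicCompletion R) f))
          (algebraMap R (mAdicCompletion R) t)))).comp
    (algebraMap (mAdicCompletion R)
      (Localization.Away (algebraMap R (mAdicCompletion R) f)))

/-- The canonical ring homomorphism `R̂ → R̂₂`. -/
noncomputable def rho₂ : R →+* Rhat₂ R f t :=
  (algebraMap (Localization.Away f)
      (tAdicCompletion (Localization.Away f)
        (algebraMap R (Localization.Away f) t))).comp
    (algebraMap R (Localization.Away f))

end LocalSetup


section Fields

variable (R : Type) [CommRing R] [IsDomain R] [IsLocalRing R] (f t : R)
  [IsDomain (Rhat₀ R f t)]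

/-- `F₀`: the fraction field of `R̂₀`. -/
noncomputable def F₀loc : Type := FractionRing (Rhat₀ R f t)

noncomputable instance : Field (F₀loc R f t) :=
  inferInstanceAs (Field (FractionRing (Rhat₀ R f t)))

noncomputable instance : Algebra (Rhat₀ R f t) (F₀loc R f t) :=
  inferInstanceAs (Algebra (Rhat₀ R f t) (FractionRing (Rhat₀ R f t)))

/-- `F = Frac(R̂)`, realized as a subfield of `F₀`. -/
noncomputable def Fsub : Subfield (F₀loc R f t) :=
  Subfield.closure (Set.range ((algebraMap (Rhat₀ R f t) (F₀loc R f t)).comp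
    ((iota₁₀ R f t).comp (algebraMap R (mAdicCompletion R)))))

/-- `F₁ = Frac(R̂₁)`, realized as a subfield of `F₀`. -/
noncomputable def F₁sub : Subfield (F₀loc R f t) :=
  Subfield.closure (Set.range ((algebraMap (Rhat₀ R f t) (F₀loc R f t)).comp (iota₁₀ R f t)))

/-- `F₂ = Frac(R̂₂)`, realized as a subfield of `F₀` via the canonical map `j₂ : R̂₂ → R̂₀`. -/
noncomputable def F₂sub (j₂ : Rhat₂ R f t →+* Rhat₀ R f t) : Subfield (F₀loc R f t) :=
  Subfield.closure (Set.range ((algebraMap (Rhat₀ R f t) (F₀loc R f t)).comp j₂))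

end Fields

/-! Modulo `t`, an element `a ∈ R̂₀` lies in `R̂₁[f⁻¹]`, so `fⁿ a ≡ r (mod t)` for some
`r ∈ R̂₁`. Since `m = (f, t)` we have `m ^ (n + 1) ⊆ (fⁿ, t)`, so approximating `r` by some
`r₀ ∈ R̂` modulo `m ^ (n + 1)` gives `r = r₀ + fⁿ b + t c'` in `R̂₁`. Hence
`a ≡ b + r₀ / fⁿ (mod t)`, and `r₀ / fⁿ` already lies in `R̂[f⁻¹] ⊆ R̂₂`. -/

namespace AdicCompletion

variable {A : Type*} [CommRing A] {I J : Ideal A} {n : ℕ}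

theorem mem_map_algebraMap_of_val_eq_zero (hI : I.FG) (hJ : I ^ n ≤ J)
    {x : AdicCompletion I A} (hx : x.val n = 0) :
    x ∈ J.map (algebraMap A (AdicCompletion I A)) := by
  have hxI : x ∈ (I ^ n • ⊤ : Submodule A (AdicCompletion I A)) := by
    rw [pow_smul_top_eq_ker_eval hI]
    exact hx
  have hxJ := Submodule.smul_mono_left hJ hxI
  rwa [Ideal.smul_top_eq_map] at hxJ

theorem exists_sub_algebraMap_mem_map (hI : I.FG) (hJ : I ^ n ≤ J) (x : AdicCompletion I A) :
    ∃ r : A, x - algebraMap A _ r ∈ J.map (algebraMap A (AdicCompletion I A)) := by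
  obtain ⟨r, hr⟩ := Submodule.Quotient.mk_surjective _ (x.val n)
  refine ⟨r, mem_map_algebraMap_of_val_eq_zero hI hJ ?_⟩
  rw [val_sub_apply, ← hr, sub_eq_zero]
  rfl

theorem exists_eq_algebraMap_add_mul_add_mul (hI : I.FG) {g h : A}
    (hJ : I ^ n ≤ Ideal.span {g, h}) (x : AdicCompletion I A) :
    ∃ (r : A) (b c : AdicCompletion I A),
      x = algebraMap A _ r + algebraMap A _ g * b + algebraMap A _ h * c := by
  obtain ⟨r, hr⟩ := exists_sub_algebraMap_mem_map hI hJ x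
  rw [Ideal.map_span, Set.image_pair, Ideal.mem_span_pair] at hr
  obtain ⟨b, c, hbc⟩ := hr
  exact ⟨r, b, c, by rw [add_assoc, mul_comm _ b, mul_comm _ c, hbc, add_sub_cancel]⟩

theorem exists_dvd_sub_algebraMap (t : A) (x : AdicCompletion (Ideal.span {t}) A) :
    ∃ r : A, algebraMap A _ t ∣ x - algebraMap A _ r := by
  obtain ⟨r, hr⟩ := exists_sub_algebraMap_mem_map (Submodule.fg_span_singleton t) (pow_one _).le x
  rw [Ideal.map_span, Set.image_singleton, Ideal.mem_span_singleton] at hr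
  exact ⟨r, hr⟩

end AdicCompletion

theorem Ideal.span_pair_pow_succ_le {R : Type*} [CommRing R] (f t : R) (n : ℕ) :
    Ideal.span {f, t} ^ (n + 1) ≤ Ideal.span {f ^ n, t} := by
  have h := Ideal.sup_pow_add_le_pow_sup_pow (I := Ideal.span {f}) (J := Ideal.span {t})
    (n := n) (m := 1)
  simpa [Ideal.span_insert, Ideal.span_singleton_pow] using h

section AwayCompletion

variable {B : Type} [CommRing B] (g s : B)

/-- `iota₁₀ R f t` and `rho₂ R f t` are, definitionally, this map for `(f, t)` over `R̂₁` and
over `R̂` respectively. -/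
noncomputable def toAwayCompletion :
    B →+* tAdicCompletion (Localization.Away g) (algebraMap B (Localization.Away g) s) :=
  (algebraMap (Localization.Away g)
    (tAdicCompletion (Localization.Away g) (algebraMap B (Localization.Away g) s))).comp
    (algebraMap B (Localization.Away g))

theorem isUnit_toAwayCompletion_self : IsUnit (toAwayCompletion g s g) := by
  rw [toAwayCompletion, RingHom.comp_apply]
  exact (IsLocalization.Away.algebraMap_isUnit g).map _

theorem exists_dvd_pow_mul_sub_toAwayCompletion
    (x : tAdicCompletion (Localization.Away g) (algebraMap B (Localization.Away g) s)) :
    ∃ (r : B) (n : ℕ), toAwayCompletion g s s ∣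
      toAwayCompletion g s g ^ n * x - toAwayCompletion g s r := by
  obtain ⟨x₀, hx₀⟩ := AdicCompletion.exists_dvd_sub_algebraMap _ x
  obtain ⟨n, r, hr⟩ := IsLocalization.Away.surj g x₀
  refine ⟨r, n, ?_⟩
  have hfactor : toAwayCompletion g s g ^ n * x - toAwayCompletion g s r =
      toAwayCompletion g s g ^ n * (x - algebraMap _ _ x₀) := by
    simp only [toAwayCompletion, RingHom.comp_apply, ← hr, map_mul, map_pow]
    ring
  rw [hfactor]
  exact dvd_mul_of_dvd_right hx₀ _

end AwayCompletion

section LocalSetup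

variable {R : Type} [CommRing R] [IsLocalRing R] {f t : R}

theorem isUnit_iota₁₀_algebraMap_self :
    IsUnit (iota₁₀ R f t (algebraMap R (mAdicCompletion R) f)) :=
  isUnit_toAwayCompletion_self _ _

theorem Rhat₀.exists_dvd_pow_mul_sub (a : Rhat₀ R f t) :
    ∃ (r : mAdicCompletion R) (n : ℕ),
      iota₁₀ R f t (algebraMap R _ t) ∣
        iota₁₀ R f t (algebraMap R _ f) ^ n * a - iota₁₀ R f t r :=
  exists_dvd_pow_mul_sub_toAwayCompletion _ _ a

theorem mAdicCompletion.exists_eq_algebraMap_add_pow_mul_add_mul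
    (hparams : IsLocalRing.maximalIdeal R = Ideal.span {f, t}) (r : mAdicCompletion R) (n : ℕ) :
    ∃ (r₀ : R) (b c : mAdicCompletion R),
      r = algebraMap R _ r₀ + algebraMap R _ f ^ n * b + algebraMap R _ t * c := by
  have hfg : (IsLocalRing.maximalIdeal R).FG := hparams ▸ ⟨{f, t}, by simp⟩
  rw [← map_pow]
  exact AdicCompletion.exists_eq_algebraMap_add_mul_add_mul hfg
    (hparams ▸ Ideal.span_pair_pow_succ_le f t n) r

theorem Rhat₂.exists_map_mul_pow_eq (j₂ : Rhat₂ R f t →+* Rhat₀ R f t)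
    (hj₂ : ∀ x : R, j₂ (rho₂ R f t x) = iota₁₀ R f t (algebraMap R (mAdicCompletion R) x))
    (r₀ : R) (n : ℕ) :
    ∃ c : Rhat₂ R f t, j₂ c * iota₁₀ R f t (algebraMap R _ f) ^ n =
      iota₁₀ R f t (algebraMap R _ r₀) := by
  obtain ⟨u, hu⟩ : IsUnit (rho₂ R f t f) := isUnit_toAwayCompletion_self f t
  refine ⟨rho₂ R f t r₀ * ↑u⁻¹ ^ n, ?_⟩
  rw [← hj₂, ← hj₂, ← map_pow, ← map_mul, mul_assoc, ← mul_pow, ← hu, Units.inv_mul, one_pow,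
    mul_one]

end LocalSetup

theorem local_additive_decomposition_general
    (R : Type) [CommRing R] [IsLocalRing R]
    (f t : R)
    -- `R̂` is a 2-dimensional regular local ring with local parameters `f, t`:
    (hparams : IsLocalRing.maximalIdeal R = Ideal.span {f, t})
    -- the canonical homomorphism `R̂₂ → R̂₀` (uniquely determined by compatibility
    -- with the canonical maps from `R̂`):
    (j₂ : Rhat₂ R f t →+* Rhat₀ R f t)
    (hj₂ : ∀ x : R, j₂ (rho₂ R f t x) = iota₁₀ R f t (algebraMap R (mAdicCompletion R) x))
    (a : Rhat₀ R f t) :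
    ∃ (b : mAdicCompletion R) (c : Rhat₂ R f t),
      iota₁₀ R f t (algebraMap R (mAdicCompletion R) t) ∣
        (a - (iota₁₀ R f t b + j₂ c)) := by
  obtain ⟨r, n, hr⟩ := Rhat₀.exists_dvd_pow_mul_sub a
  obtain ⟨r₀, b, c₁, rfl⟩ :=
    mAdicCompletion.exists_eq_algebraMap_add_pow_mul_add_mul hparams r n
  obtain ⟨c, hc⟩ := Rhat₂.exists_map_mul_pow_eq j₂ hj₂ r₀ n
  refine ⟨b, c, (isUnit_iota₁₀_algebraMap_self.pow n).dvd_mul_left.mp ?_⟩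
  have hscaled : iota₁₀ R f t (algebraMap R _ f) ^ n * (a - (iota₁₀ R f t b + j₂ c)) =
      (iota₁₀ R f t (algebraMap R _ f) ^ n * a - iota₁₀ R f t
        (algebraMap R _ r₀ + algebraMap R _ f ^ n * b + algebraMap R _ t * c₁)) +
      iota₁₀ R f t (algebraMap R _ t) * iota₁₀ R f t c₁ := by
    simp only [map_add, map_mul, map_pow]
    linear_combination (-1 : Rhat₀ R f t) * hc
  rw [hscaled]
  exact dvd_add hr (dvd_mul_right _ _)

/-- Lemma 5.2 of Harbater–Hartmann.  With `R̂` a `t`-adically complete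
2-dimensional regular local domain with local parameters `f, t`, and `R̂₁, R̂₂, R̂₀` the
completions described above, every `a ∈ R̂₀` is congruent modulo `tR̂₀` to a sum `b + c`
with `b ∈ R̂₁` and `c ∈ R̂₂`. -/
theorem local_additive_decomposition
    (R : Type) [CommRing R] [IsDomain R] [IsLocalRing R] [IsNoetherianRing R]
    (f t : R)
    -- `R̂` is a 2-dimensional regular local ring with local parameters `f, t`:
    (hparams : IsLocalRing.maximalIdeal R = Ideal.span {f, t})
    (hdim : ringKrullDim R = 2)
    -- `R̂` is `t`-adically complete:
    [IsAdicComplete (Ideal.span {t} : Ideal R) R]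
    -- the canonical homomorphism `R̂₂ → R̂₀` (uniquely determined by compatibility
    -- with the canonical maps from `R̂`):
    (j₂ : Rhat₂ R f t →+* Rhat₀ R f t)
    (hj₂ : ∀ x : R, j₂ (rho₂ R f t x) = iota₁₀ R f t (algebraMap R (mAdicCompletion R) x))
    (a : Rhat₀ R f t) :
    ∃ (b : mAdicCompletion R) (c : Rhat₂ R f t),
      iota₁₀ R f t (algebraMap R (mAdicCompletion R) t) ∣
        (a - (iota₁₀ R f t b + j₂ c)) :=
  local_additive_decomposition_general R f t hparams j₂ hj₂ a
end
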